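/- arXiv:quant-ph/0703046 — 2 statements merged into one kernel-verified Lean document; each statement's English description precedes it below -/
import Mathlib

section
/- Let ρ, σ be density operators and {E_m} any POVM with outcome probabilities p_m = Tr(E_m ρ) and q_m = Tr(E_m σ). Then (1/2)Σ_m |p_m − q_m| ≤ ‖ρ − σ‖_tr, and there exists a POVM achieving equality (in fact a two-outcome projective measurement onto the positive part of ρ − σ suffices). -/
open Matrix BigOperators ComplexOrder

noncomputable def traceDist {d : Type*} [Fintype d] [DecidableEq d]
    (A B : Matrix d d ℂ) : ℝ :=
  (1/2) * (((Matrix.posSemidef_conjTranspose_mul_self (A - B)).1.eigenvectorUnitary.1 *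
    diagonal (((↑) : ℝ → ℂ) ∘ Real.sqrt ∘ (Matrix.posSemidef_conjTranspose_mul_self (A - B)).1.eigenvalues) *
    (star (Matrix.posSemidef_conjTranspose_mul_self (A - B)).1.eigenvectorUnitary :
      Matrix d d ℂ)).trace).re

noncomputable def maxEig {d : Type*} [Fintype d] (ρ : Matrix d d ℂ) : ℝ :=
  ⨆ v : {v : d → ℂ // ∑ i, ‖v i‖ ^ 2 = 1}, (star v.1 ⬝ᵥ ρ.mulVec v.1).re

def IsDensity {d : Type*} [Fintype d] [DecidableEq d] (ρ : Matrix d d ℂ) : Prop :=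
  ρ.PosSemidef ∧ ρ.trace = 1

namespace Povm7Aux
variable {d : ℕ}

noncomputable def cdiag (U : Matrix (Fin d) (Fin d) ℂ) (v : Fin d → ℝ) :
    Matrix (Fin d) (Fin d) ℂ :=
  U * Matrix.diagonal (fun i => (v i : ℂ)) * Uᴴ

variable {U : Matrix (Fin d) (Fin d) ℂ}

lemma cdiag_mul (hU : Uᴴ * U = 1) (v w : Fin d → ℝ) :
    cdiag U v * cdiag U w = cdiag U (v * w) := by
  unfold cdiag
  simp only [← mul_assoc]
  rw [mul_assoc (U * diagonal fun i => ((v i : ℂ))) Uᴴ U, hU, mul_one, mul_assoc U,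
    diagonal_mul_diagonal]
  congr 2
  funext i
  simp

lemma cdiag_congr (v w : Fin d → ℝ) (h : v = w) : cdiag U v = cdiag U w := by rw [h]

lemma cdiag_add (v w : Fin d → ℝ) :
    cdiag U v + cdiag U w = cdiag U (v + w) := by
  simp only [cdiag, ← add_mul, ← mul_add, diagonal_add]
  congr 3
  funext i
  simp

lemma trace_cdiag (hU : Uᴴ * U = 1) (v : Fin d → ℝ) :
    (cdiag U v).trace = ((∑ i, v i : ℝ) : ℂ) := by
  unfold cdiag
  rw [trace_mul_cycle, hU, one_mul, trace_diagonal]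
  push_cast
  rfl

lemma posSemidef_cdiag {v : Fin d → ℝ} (hv : ∀ i, 0 ≤ v i) : (cdiag U v).PosSemidef := by
  refine (posSemidef_diagonal_iff.mpr fun i => ?_).mul_mul_conjTranspose_same U
  rw [Complex.nonneg_iff]
  simp [hv i]

lemma trace_re_nonneg {M : Matrix (Fin d) (Fin d) ℂ} (hM : M.PosSemidef) :
    0 ≤ M.trace.re := by
  rw [Matrix.trace, Complex.re_sum]
  refine Finset.sum_nonneg fun i _ => ?_
  have := hM.re_dotProduct_nonneg (Pi.single i 1)
  simpa [Matrix.mulVec_single, dotProduct, Pi.single_apply, Finset.sum_ite_eq] using this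

open scoped Matrix.Norms.L2Operator MatrixOrder in
lemma trace_mul_re_nonneg {E Q : Matrix (Fin d) (Fin d) ℂ}
    (hE : E.PosSemidef) (hQ : Q.PosSemidef) : 0 ≤ ((E * Q).trace).re := by
  obtain ⟨C, hC⟩ := CStarAlgebra.nonneg_iff_eq_star_mul_self.mp hQ.nonneg
  rw [hC, ← mul_assoc, trace_mul_cycle]
  exact trace_re_nonneg (hE.mul_mul_conjTranspose_same C)

open scoped MatrixOrder in
lemma main_abstract {d : ℕ} (ρ σ : Matrix (Fin d) (Fin d) ℂ)
    (U : Matrix (Fin d) (Fin d) ℂ) (μ : Fin d → ℝ)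
    (hU : Uᴴ * U = 1) (hU2 : U * Uᴴ = 1)
    (hHerm : (ρ - σ)ᴴ = ρ - σ)
    (hspec : ρ - σ = cdiag U μ) :
    (∀ (M : ℕ) (Epovm : Fin M → Matrix (Fin d) (Fin d) ℂ),
        (∀ m, (Epovm m).PosSemidef) → ∑ m, Epovm m = 1 →
        (1/2) * ∑ m, |((Epovm m * ρ).trace).re - ((Epovm m * σ).trace).re| ≤
          traceDist ρ σ) ∧
    ∃ F : Fin 2 → Matrix (Fin d) (Fin d) ℂ,
      (∀ m, (F m).PosSemidef) ∧ (∑ m, F m = 1) ∧ (∀ m, F m * F m = F m) ∧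
      (1/2) * ∑ m, |((F m * ρ).trace).re - ((F m * σ).trace).re| =
        traceDist ρ σ := by
  have habs_sq : ((fun i => |μ i|) * fun i => |μ i|) = μ * μ := by
    funext i; simp [abs_mul_abs_self]
  have hsqrt : ((Matrix.posSemidef_conjTranspose_mul_self (ρ - σ)).1.eigenvectorUnitary.1 *
      diagonal (((↑) : ℝ → ℂ) ∘ Real.sqrt ∘
        (Matrix.posSemidef_conjTranspose_mul_self (ρ - σ)).1.eigenvalues) *
      (star (Matrix.posSemidef_conjTranspose_mul_self (ρ - σ)).1.eigenvectorUnitary :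
        Matrix (Fin d) (Fin d) ℂ))
      = cdiag U (fun i => |μ i|) := by
    have hA := Matrix.posSemidef_conjTranspose_mul_self (ρ - σ)
    have e : cfc Real.sqrt ((ρ - σ)ᴴ * (ρ - σ)) = cdiag U (fun i => |μ i|) := by
      rw [← cfcₙ_eq_cfc (hf0 := Real.sqrt_zero), ← CFC.sqrt_eq_real_sqrt _ hA.nonneg]
      refine CFC.sqrt_unique ?_ (posSemidef_cdiag fun i => abs_nonneg (μ i)).nonneg
      rw [cdiag_mul hU, habs_sq, hHerm, hspec, cdiag_mul hU]
    have e2 := hA.1.cfc_eq Real.sqrt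
    rw [e] at e2
    exact e2.symm
  have htd : traceDist ρ σ = (1/2) * ∑ i, |μ i| := by
    rw [traceDist, hsqrt, trace_cdiag hU, Complex.ofReal_re]
  have key : ∀ X : Matrix (Fin d) (Fin d) ℂ,
      ((X * ρ).trace).re - ((X * σ).trace).re = ((X * (ρ - σ)).trace).re := by
    intro X
    rw [mul_sub, trace_sub, Complex.sub_re]
  set vp : Fin d → ℝ := fun i => max (μ i) 0 with hvp
  set vn : Fin d → ℝ := fun i => max (-μ i) 0 with hvn
  have hvp0 : ∀ i, 0 ≤ vp i := fun i => le_max_right _ _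
  have hvn0 : ∀ i, 0 ≤ vn i := fun i => le_max_right _ _
  have hfun : μ + vn = vp := by
    funext i
    simp only [Pi.add_apply, hvp, hvn]
    rcases le_total 0 (μ i) with h | h
    · rw [max_eq_left h, max_eq_right (by linarith)]; ring
    · rw [max_eq_right h, max_eq_left (by linarith)]; ring
  have hdecomp : cdiag U μ + cdiag U vn = cdiag U vp := by
    rw [cdiag_add, hfun]
  have habs : (fun i => |μ i|) = vp + vn := by
    funext i
    simp only [Pi.add_apply, hvp, hvn]
    rcases le_total 0 (μ i) with h | h
    · rw [abs_of_nonneg h, max_eq_left h, max_eq_right (by linarith)]; ring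
    · rw [abs_of_nonpos h, max_eq_right h, max_eq_left (by linarith)]; ring
  have hQR : ρ - σ = cdiag U vp - cdiag U vn := by
    rw [hspec, ← hdecomp]; abel
  constructor
  · intro M Epovm hE hsum
    rw [htd]
    have hbd : ∀ m, |((Epovm m * ρ).trace).re - ((Epovm m * σ).trace).re|
        ≤ ((Epovm m * (cdiag U vp + cdiag U vn)).trace).re := by
      intro m
      rw [key, hQR, mul_sub, trace_sub, Complex.sub_re, mul_add, trace_add, Complex.add_re]
      have h1 := trace_mul_re_nonneg (hE m) (posSemidef_cdiag (U := U) hvp0)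
      have h2 := trace_mul_re_nonneg (hE m) (posSemidef_cdiag (U := U) hvn0)
      calc |((Epovm m * cdiag U vp).trace).re - ((Epovm m * cdiag U vn).trace).re|
          ≤ |((Epovm m * cdiag U vp).trace).re| + |((Epovm m * cdiag U vn).trace).re| :=
            abs_sub _ _
        _ = _ := by rw [abs_of_nonneg h1, abs_of_nonneg h2]
    have hsum2 : ∑ m, ((Epovm m * (cdiag U vp + cdiag U vn)).trace).re
        = ∑ i, |μ i| := by
      rw [← Complex.re_sum, ← Matrix.trace_sum, ← Finset.sum_mul, hsum, one_mul,
        cdiag_add, ← habs, trace_cdiag hU, Complex.ofReal_re]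
    have := Finset.sum_le_sum fun m (_ : m ∈ Finset.univ) => hbd m
    rw [hsum2] at this
    nlinarith [this]
  · set ind : Fin d → ℝ := fun i => if 0 ≤ μ i then 1 else 0 with hind
    refine ⟨![cdiag U ind, cdiag U (fun i => 1 - ind i)], ?_, ?_, ?_, ?_⟩
    · intro m
      fin_cases m
      · exact posSemidef_cdiag fun i => by by_cases h : 0 ≤ μ i <;> simp [hind, h]
      · exact posSemidef_cdiag fun i => by by_cases h : 0 ≤ μ i <;> simp [hind, h]
    · rw [Fin.sum_univ_two]
      simp only [Matrix.cons_val_zero, Matrix.cons_val_one, Matrix.head_cons]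
      rw [cdiag_add]
      have h1 : (ind + fun i => 1 - ind i) = fun _ => (1 : ℝ) := by funext i; simp
      rw [h1]
      show U * diagonal (fun _ => ((1:ℝ) : ℂ)) * Uᴴ = 1
      simp only [Complex.ofReal_one]
      rw [diagonal_one, mul_one, hU2]
    · intro m
      fin_cases m <;>
        simp only [Matrix.cons_val_zero, Matrix.cons_val_one, Matrix.head_cons,
          Fin.mk_zero, Fin.mk_one] <;>
        rw [cdiag_mul hU] <;>
        refine cdiag_congr _ _ (funext fun i => ?_) <;>
        by_cases h : 0 ≤ μ i <;> simp [hind, h]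
    · rw [Fin.sum_univ_two]
      simp only [Matrix.cons_val_zero, Matrix.cons_val_one, Matrix.head_cons]
      rw [key, key, hspec, cdiag_mul hU, cdiag_mul hU, trace_cdiag hU, trace_cdiag hU,
        Complex.ofReal_re, Complex.ofReal_re]
      have h0 : ∀ i, (ind * μ) i = vp i := by
        intro i
        simp only [Pi.mul_apply, hind, hvp]
        split_ifs with h
        · rw [max_eq_left h]; ring
        · rw [max_eq_right (le_of_not_ge h)]; ring
      have h1 : ∀ i, ((fun i => 1 - ind i) * μ) i = -vn i := by
        intro i
        simp only [Pi.mul_apply, hind, hvn]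
        split_ifs with h
        · rw [max_eq_right (neg_nonpos.mpr h)]; ring
        · rw [max_eq_left (neg_nonneg.mpr (le_of_not_ge h))]; ring
      rw [Finset.sum_congr rfl fun i _ => h0 i, Finset.sum_congr rfl fun i _ => h1 i, htd]
      have hvpnn : 0 ≤ ∑ i, vp i := Finset.sum_nonneg fun i _ => hvp0 i
      have hvnnn : 0 ≤ ∑ i, vn i := Finset.sum_nonneg fun i _ => hvn0 i
      rw [abs_of_nonneg hvpnn, Finset.sum_neg_distrib, abs_neg, abs_of_nonneg hvnnn]
      have hsplit : ∑ i, |μ i| = ∑ i, vp i + ∑ i, vn i := by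
        rw [← Finset.sum_add_distrib]
        exact Finset.sum_congr rfl fun i _ => congrFun habs i
      rw [hsplit]

end Povm7Aux

theorem povm_statistical_distance_le_traceDist
    {d : ℕ} (ρ σ : Matrix (Fin d) (Fin d) ℂ)
    (hρ : IsDensity ρ) (hσ : IsDensity σ) :
    (∀ (M : ℕ) (Epovm : Fin M → Matrix (Fin d) (Fin d) ℂ),
        (∀ m, (Epovm m).PosSemidef) → ∑ m, Epovm m = 1 →
        (1/2) * ∑ m, |((Epovm m * ρ).trace).re - ((Epovm m * σ).trace).re| ≤
          traceDist ρ σ) ∧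
    ∃ F : Fin 2 → Matrix (Fin d) (Fin d) ℂ,
      (∀ m, (F m).PosSemidef) ∧ (∑ m, F m = 1) ∧ (∀ m, F m * F m = F m) ∧
      (1/2) * ∑ m, |((F m * ρ).trace).re - ((F m * σ).trace).re| =
        traceDist ρ σ := by
  have hΔ : (ρ - σ).IsHermitian := hρ.1.1.sub hσ.1.1
  refine Povm7Aux.main_abstract ρ σ (hΔ.eigenvectorUnitary : Matrix (Fin d) (Fin d) ℂ)
    hΔ.eigenvalues ?_ ?_ hΔ.eq ?_
  · simpa [Matrix.star_eq_conjTranspose] using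
      (Matrix.mem_unitaryGroup_iff').mp (hΔ.eigenvectorUnitary).2
  · simpa [Matrix.star_eq_conjTranspose] using
      (Matrix.mem_unitaryGroup_iff).mp (hΔ.eigenvectorUnitary).2
  · conv_lhs => rw [hΔ.spectral_theorem]
    rfl
end

section
/- Let E be a linear trace-preserving map with E(I/d) = I/d on a d = 2^n dimensional space, and suppose E is strongly (t,ε)-entropically secure with t ≤ n−1: for all ρ with H_∞(ρ) ≥ t, all interpretations {(p_i,σ_i)} of ρ, all adversaries (POVMs with classical output) A, and all functions f, |Pr_i[A(E(σ_i)) = f(σ_i)] − Pr_i[A(E(ρ)) = f(σ_i)]| < ε. Then E is (t−1, 2ε)-indistinguishable: for all ρ with H_∞(ρ) ≥ t−1, ‖E(ρ) − I/d‖_tr < 2ε. -/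
open Matrix BigOperators ComplexOrder

/-- The probability that the POVM adversary A, measuring the state C i
(when message i was sent with probability p i), outputs exactly f(σ i). -/
noncomputable def guessProb {D m N : ℕ} (p : Fin m → ℝ)
    (A : Fin N → Matrix (Fin D) (Fin D) ℂ) (f : Fin m → Fin N)
    (C : Fin m → Matrix (Fin D) (Fin D) ℂ) : ℝ :=
  ∑ i, p i * ((A (f i) * C i).trace).re

/-- Strong (t,ε)-entropic security: for every state ρ of min-entropy ≥ t,
every interpretation {(p i, σ i)} of ρ, every POVM adversary A with finitely
many classical outcomes and every function f on the messages,
|Pr_i[A(E(σ i)) = f(σ i)] − Pr_i[A(E(ρ)) = f(σ i)]| < ε. -/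
def StrongEntropicSecurity {D : ℕ}
    (E : Matrix (Fin D) (Fin D) ℂ →ₗ[ℂ] Matrix (Fin D) (Fin D) ℂ)
    (t ε : ℝ) : Prop :=
  ∀ (m : ℕ) (p : Fin m → ℝ) (σ : Fin m → Matrix (Fin D) (Fin D) ℂ),
    (∀ i, 0 ≤ p i) → ∑ i, p i = 1 → (∀ i, IsDensity (σ i)) →
    maxEig (∑ i, p i • σ i) ≤ (2 : ℝ) ^ (-t) →
    ∀ (N : ℕ) (A : Fin N → Matrix (Fin D) (Fin D) ℂ),
      (∀ z, (A z).PosSemidef) → ∑ z, A z = 1 →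
      ∀ f : Fin m → Fin N,
        |guessProb p A f (fun i => E (σ i)) -
          guessProb p A f (fun _ => E (∑ i, p i • σ i))| < ε

/-- (t,ε)-indistinguishability: every state of min-entropy ≥ t is encrypted
to within trace distance ε of the maximally mixed state. -/
def Indistinguishable {D : ℕ}
    (E : Matrix (Fin D) (Fin D) ℂ →ₗ[ℂ] Matrix (Fin D) (Fin D) ℂ)
    (t ε : ℝ) : Prop :=
  ∀ ρ : Matrix (Fin D) (Fin D) ℂ, IsDensity ρ → maxEig ρ ≤ (2 : ℝ) ^ (-t) →
    traceDist (E ρ) (((D : ℂ))⁻¹ • 1) < ε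

set_option linter.unusedSectionVars false
set_option maxHeartbeats 1000000

/-! ### Auxiliary lemmas -/
section aux
variable {ι : Type*} [Fintype ι] [DecidableEq ι]

lemma quad_bound (ρ : Matrix ι ι ℂ) (v : ι → ℂ) (hv : ∑ i, ‖v i‖ ^ 2 = 1) :
    (star v ⬝ᵥ ρ.mulVec v).re ≤ ∑ i, ∑ j, ‖ρ i j‖ := by
  have hb : ∀ i, ‖v i‖ ≤ 1 := by
    intro i
    have h1 : ‖v i‖ ^ 2 ≤ 1 := by
      rw [← hv]
      exact Finset.single_le_sum (fun j _ => sq_nonneg ‖v j‖) (Finset.mem_univ i)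
    nlinarith [norm_nonneg (v i)]
  calc (star v ⬝ᵥ ρ.mulVec v).re ≤ ‖star v ⬝ᵥ ρ.mulVec v‖ := Complex.re_le_norm _
    _ ≤ ∑ i, ‖star v i * ρ.mulVec v i‖ := norm_sum_le _ _
    _ ≤ ∑ i, ∑ j, ‖ρ i j‖ := by
        apply Finset.sum_le_sum
        intro i _
        rw [norm_mul]
        calc ‖star v i‖ * ‖ρ.mulVec v i‖ ≤ 1 * ‖ρ.mulVec v i‖ := by
              apply mul_le_mul_of_nonneg_right _ (norm_nonneg _)
              simpa using hb i
          _ = ‖∑ j, ρ i j * v j‖ := by rw [one_mul]; rfl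
          _ ≤ ∑ j, ‖ρ i j * v j‖ := norm_sum_le _ _
          _ ≤ ∑ j, ‖ρ i j‖ := by
              apply Finset.sum_le_sum
              intro j _
              rw [norm_mul]
              calc ‖ρ i j‖ * ‖v j‖ ≤ ‖ρ i j‖ * 1 :=
                    mul_le_mul_of_nonneg_left (hb j) (norm_nonneg _)
                _ = ‖ρ i j‖ := mul_one _

lemma bddAbove_quad (ρ : Matrix ι ι ℂ) :
    BddAbove (Set.range fun v : {v : ι → ℂ // ∑ i, ‖v i‖ ^ 2 = 1} =>
      (star v.1 ⬝ᵥ ρ.mulVec v.1).re) := by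
  refine ⟨∑ i, ∑ j, ‖ρ i j‖, ?_⟩
  rintro x ⟨v, rfl⟩
  exact quad_bound ρ v.1 v.2

lemma quad_le_maxEig (ρ : Matrix ι ι ℂ) {v : ι → ℂ} (hv : ∑ i, ‖v i‖ ^ 2 = 1) :
    (star v ⬝ᵥ ρ.mulVec v).re ≤ maxEig ρ :=
  le_ciSup (bddAbove_quad ρ) ⟨v, hv⟩

lemma star_dot_self (v : ι → ℂ) : star v ⬝ᵥ v = ((∑ i, ‖v i‖ ^ 2 : ℝ) : ℂ) := by
  push_cast
  unfold dotProduct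
  congr 1
  ext i
  rw [Pi.star_apply, Complex.star_def, ← Complex.normSq_eq_conj_mul_self,
    Complex.normSq_eq_norm_sq]
  push_cast
  ring

lemma eq_re_of_nonneg {z : ℂ} (hz : 0 ≤ z) : z = (z.re : ℂ) := by
  rw [Complex.le_def] at hz
  exact Complex.ext rfl (by simpa using hz.2.symm)

lemma quad_scale (ρ : Matrix ι ι ℂ) (c : ℝ) (x : ι → ℂ) :
    star (c • x) ⬝ᵥ ρ.mulVec (c • x) = (c : ℂ) ^ 2 * (star x ⬝ᵥ ρ.mulVec x) := by
  rw [star_smul, Matrix.mulVec_smul, smul_dotProduct, dotProduct_smul]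
  simp [Complex.real_smul, star_smul, Complex.star_def, Complex.conj_ofReal]
  ring

lemma quad_le_of_psd {ρ : Matrix ι ι ℂ} (hρ : ρ.PosSemidef) (x : ι → ℂ) {a : ℝ}
    (ha : maxEig ρ ≤ a) :
    (star x ⬝ᵥ ρ.mulVec x).re ≤ a * (∑ i, ‖x i‖ ^ 2) := by
  set n2 : ℝ := ∑ i, ‖x i‖ ^ 2 with hn2
  have hn2nn : 0 ≤ n2 := Finset.sum_nonneg fun i _ => sq_nonneg _
  rcases eq_or_lt_of_le hn2nn with h0 | hpos
  · have hx : x = 0 := by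
      funext i
      have : ‖x i‖ ^ 2 ≤ 0 := h0 ▸ Finset.single_le_sum
        (fun j (_ : j ∈ Finset.univ) => sq_nonneg ‖x j‖) (Finset.mem_univ i)
      have := le_antisymm this (sq_nonneg _)
      simpa [pow_eq_zero_iff] using this
    simp [hx, ← h0]
  · set c : ℝ := (Real.sqrt n2)⁻¹ with hc
    have hs : Real.sqrt n2 > 0 := Real.sqrt_pos.mpr hpos
    have hc2 : c ^ 2 * n2 = 1 := by
      rw [hc, inv_pow, Real.sq_sqrt hn2nn]
      field_simp
    have hv : ∑ i, ‖(c • x) i‖ ^ 2 = 1 := by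
      have : ∀ i, ‖(c • x) i‖ ^ 2 = c ^ 2 * ‖x i‖ ^ 2 := by
        intro i
        rw [Pi.smul_apply, norm_smul, mul_pow, Real.norm_eq_abs, sq_abs]
      rw [Finset.sum_congr rfl fun i _ => this i, ← Finset.mul_sum, ← hn2, hc2]
    have hle := quad_le_maxEig ρ hv
    rw [quad_scale] at hle
    have hre : ((c:ℂ) ^ 2 * (star x ⬝ᵥ ρ.mulVec x)).re
        = c ^ 2 * (star x ⬝ᵥ ρ.mulVec x).re := by
      rw [show ((c:ℂ) ^ 2) = ((c ^ 2 : ℝ) : ℂ) by push_cast; ring,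
        Complex.re_ofReal_mul]
    rw [hre] at hle
    have hle2 : c ^ 2 * (star x ⬝ᵥ ρ.mulVec x).re ≤ a := le_trans hle ha
    calc (star x ⬝ᵥ ρ.mulVec x).re
        = c ^ 2 * (star x ⬝ᵥ ρ.mulVec x).re * n2 := by
          rw [mul_comm (c ^ 2), mul_assoc, hc2, mul_one]
      _ ≤ a * n2 := mul_le_mul_of_nonneg_right hle2 hn2nn

lemma quad_sub (A B : Matrix ι ι ℂ) (x : ι → ℂ) :
    star x ⬝ᵥ (A - B).mulVec x = star x ⬝ᵥ A.mulVec x - star x ⬝ᵥ B.mulVec x := by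
  rw [Matrix.sub_mulVec, dotProduct_sub]

lemma quad_smul_one (c : ℂ) (x : ι → ℂ) :
    star x ⬝ᵥ (c • (1 : Matrix ι ι ℂ)).mulVec x = c * (star x ⬝ᵥ x) := by
  rw [Matrix.smul_mulVec, Matrix.one_mulVec, dotProduct_smul, smul_eq_mul]

lemma quad_smul (c : ℂ) (A : Matrix ι ι ℂ) (x : ι → ℂ) :
    star x ⬝ᵥ (c • A).mulVec x = c * (star x ⬝ᵥ A.mulVec x) := by
  rw [Matrix.smul_mulVec, dotProduct_smul, smul_eq_mul]

lemma quad_add (A B : Matrix ι ι ℂ) (x : ι → ℂ) :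
    star x ⬝ᵥ (A + B).mulVec x = star x ⬝ᵥ A.mulVec x + star x ⬝ᵥ B.mulVec x := by
  rw [Matrix.add_mulVec, dotProduct_add]

lemma smul_one_sub_posSemidef {ρ : Matrix ι ι ℂ} (hρ : ρ.PosSemidef) {a : ℝ}
    (ha : maxEig ρ ≤ a) : ((a : ℂ) • 1 - ρ).PosSemidef := by
  refine Matrix.PosSemidef.of_dotProduct_mulVec_nonneg ?_ ?_
  · apply Matrix.IsHermitian.sub _ hρ.1
    rw [Matrix.IsHermitian, Matrix.conjTranspose_smul, Matrix.conjTranspose_one]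
    rw [Complex.star_def, Complex.conj_ofReal]
  · intro x
    rw [quad_sub, quad_smul_one, star_dot_self]
    set q := star x ⬝ᵥ ρ.mulVec x with hq
    rw [show q = ((q.re:ℝ):ℂ) from eq_re_of_nonneg (hρ.dotProduct_mulVec_nonneg x)]
    rw [show ((a:ℂ) * ((∑ i, ‖x i‖ ^ 2 : ℝ):ℂ) - ((q.re : ℝ):ℂ))
        = ((a * (∑ i, ‖x i‖ ^ 2) - q.re : ℝ) : ℂ) by push_cast; ring]
    rw [Complex.zero_le_real]
    have := quad_le_of_psd hρ x ha
    linarith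

lemma posSemidef_real_smul {ρ : Matrix ι ι ℂ} (hρ : ρ.PosSemidef) {c : ℝ}
    (hc : 0 ≤ c) : ((c : ℂ) • ρ).PosSemidef := by
  refine Matrix.PosSemidef.of_dotProduct_mulVec_nonneg ?_ ?_
  · rw [Matrix.IsHermitian, Matrix.conjTranspose_smul, hρ.1.eq,
      Complex.star_def, Complex.conj_ofReal]
  · intro x
    rw [quad_smul]
    exact mul_nonneg (by rw [Complex.zero_le_real]; exact hc) (hρ.dotProduct_mulVec_nonneg x)

section spec
variable {M : Matrix ι ι ℂ} (hM : M.IsHermitian)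

noncomputable def cfm (hM : M.IsHermitian) (g : ι → ℂ) : Matrix ι ι ℂ :=
  (hM.eigenvectorUnitary : Matrix ι ι ℂ) * Matrix.diagonal g *
    star (hM.eigenvectorUnitary : Matrix ι ι ℂ)

lemma cfm_mul (g h : ι → ℂ) : cfm hM g * cfm hM h = cfm hM (g * h) := by
  have hU : star (hM.eigenvectorUnitary : Matrix ι ι ℂ) *
      (hM.eigenvectorUnitary : Matrix ι ι ℂ) = 1 :=
    Matrix.mem_unitaryGroup_iff'.mp hM.eigenvectorUnitary.2
  have hmid : ∀ X : Matrix ι ι ℂ,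
      star (hM.eigenvectorUnitary : Matrix ι ι ℂ) *
        ((hM.eigenvectorUnitary : Matrix ι ι ℂ) * X) = X := fun X => by
    rw [← Matrix.mul_assoc, hU, Matrix.one_mul]
  unfold cfm
  simp only [Matrix.mul_assoc, hmid]
  rw [← Matrix.mul_assoc (Matrix.diagonal g) (Matrix.diagonal h),
    Matrix.diagonal_mul_diagonal]
  rfl

lemma cfm_one : cfm hM 1 = 1 := by
  have hU : (hM.eigenvectorUnitary : Matrix ι ι ℂ) *
      star (hM.eigenvectorUnitary : Matrix ι ι ℂ) = 1 :=
    Matrix.mem_unitaryGroup_iff.mp hM.eigenvectorUnitary.2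
  unfold cfm
  rw [show Matrix.diagonal (1 : ι → ℂ) = 1 by
    ext i j; by_cases h : i = j <;> simp [Matrix.diagonal_apply, h, Matrix.one_apply],
    Matrix.mul_one, hU]

lemma cfm_trace (g : ι → ℂ) : (cfm hM g).trace = ∑ i, g i := by
  have hU : star (hM.eigenvectorUnitary : Matrix ι ι ℂ) *
      (hM.eigenvectorUnitary : Matrix ι ι ℂ) = 1 :=
    Matrix.mem_unitaryGroup_iff'.mp hM.eigenvectorUnitary.2
  unfold cfm
  rw [Matrix.trace_mul_cycle, hU, Matrix.one_mul, Matrix.trace_diagonal]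

lemma cfm_posSemidef {g : ι → ℝ} (hg : ∀ i, 0 ≤ g i) :
    (cfm hM (fun i => (g i : ℂ))).PosSemidef := by
  have h1 : (Matrix.diagonal (fun i => (g i : ℂ))).PosSemidef :=
    Matrix.posSemidef_diagonal_iff.mpr fun i => by
      rw [Complex.zero_le_real]; exact hg i
  have := h1.mul_mul_conjTranspose_same (hM.eigenvectorUnitary : Matrix ι ι ℂ)
  rw [← Matrix.star_eq_conjTranspose] at this
  exact this

lemma cfm_spectral : M = cfm hM (fun i => (hM.eigenvalues i : ℂ)) := by
  have := hM.spectral_theorem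
  rw [Unitary.conjStarAlgAut_apply] at this
  unfold cfm
  exact this

lemma cfm_sub (g h : ι → ℂ) : cfm hM g - cfm hM h = cfm hM (g - h) := by
  unfold cfm
  rw [← Matrix.sub_mul, ← Matrix.mul_sub, Matrix.diagonal_sub]
  rfl
end spec
end aux


/-- Strong (t,ε)-entropic security implies (t−1, 2ε)-
indistinguishability, for a linear trace-preserving map E on a 2^n-dimensional
space with E(I/d) = I/d, as long as t ≤ n − 1. -/
theorem strong_entropic_security_implies_indistinguishability
    {n : ℕ} (t ε : ℝ) (ht : t ≤ (n : ℝ) - 1)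
    (E : Matrix (Fin (2 ^ n)) (Fin (2 ^ n)) ℂ →ₗ[ℂ]
         Matrix (Fin (2 ^ n)) (Fin (2 ^ n)) ℂ)
    (hTP : ∀ M, (E M).trace = M.trace)
    (hPos : ∀ M : Matrix (Fin (2 ^ n)) (Fin (2 ^ n)) ℂ,
      M.PosSemidef → (E M).PosSemidef)
    (hId : E (((2 ^ n : ℕ) : ℂ)⁻¹ • 1) = ((2 ^ n : ℕ) : ℂ)⁻¹ • 1)
    (hsec : StrongEntropicSecurity E t ε) :
    Indistinguishable E (t - 1) (2 * ε) := by
  intro ρ hρ hmax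
  -- dimension facts
  have hcard : Fintype.card (Fin (2 ^ n)) = 2 ^ n := Fintype.card_fin _
  set dR : ℝ := ((2 ^ n : ℕ) : ℝ) with hdR
  have hdRpos : 0 < dR := by positivity
  have hdc : ((2 ^ n : ℕ) : ℂ) ≠ 0 := by positivity
  -- the constant a = 2^{-(t-1)}
  set a : ℝ := (2 : ℝ) ^ (-(t - 1)) with ha
  have hapos : 0 < a := Real.rpow_pos_of_pos two_pos _
  have hmaxa : maxEig ρ ≤ a := hmax
  have had : 4 ≤ a * dR := by
    have h1 : dR = (2 : ℝ) ^ ((n : ℕ) : ℝ) := by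
      rw [hdR, Real.rpow_natCast]
      push_cast
      ring
    have h2 : a * dR = (2 : ℝ) ^ (-(t - 1) + (n : ℝ)) := by
      rw [ha, h1, ← Real.rpow_add two_pos]
    rw [h2, show (4 : ℝ) = (2 : ℝ) ^ (2 : ℝ) by
      rw [show (2:ℝ) = ((2:ℕ):ℝ) by norm_num, Real.rpow_natCast]; norm_num]
    apply Real.rpow_le_rpow_left_iff (x := 2) (by norm_num) |>.mpr
    linarith
  set s : ℝ := a * dR - 1 with hs
  have hs3 : 3 ≤ s := by rw [hs]; linarith
  have hspos : 0 < s := by linarith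
  have hsne : s ≠ 0 := ne_of_gt hspos
  -- the companion state σ1
  set Mm : Matrix (Fin (2 ^ n)) (Fin (2 ^ n)) ℂ := (a : ℂ) • 1 - ρ with hMm
  have hMpsd : Mm.PosSemidef := smul_one_sub_posSemidef hρ.1 hmaxa
  set σ1 : Matrix (Fin (2 ^ n)) (Fin (2 ^ n)) ℂ := ((s : ℝ) : ℂ)⁻¹ • Mm with hσ1
  have hσ1psd : σ1.PosSemidef := by
    rw [hσ1, show (((s : ℝ) : ℂ))⁻¹ = (((s⁻¹ : ℝ)) : ℂ) by push_cast; ring]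
    exact posSemidef_real_smul hMpsd (by positivity)
  have hMtr : Mm.trace = ((s : ℝ) : ℂ) := by
    rw [hMm, Matrix.trace_sub, Matrix.trace_smul, Matrix.trace_one, hcard, hρ.2,
      smul_eq_mul, hs]
    push_cast [hdR]
    ring
  have hσ1tr : σ1.trace = 1 := by
    rw [hσ1, Matrix.trace_smul, hMtr, smul_eq_mul,
      inv_mul_cancel₀ (by exact_mod_cast hsne)]
  have hσ1den : IsDensity σ1 := ⟨hσ1psd, hσ1tr⟩
  -- the ensemble
  set p : Fin 2 → ℝ := fun _ => 1/2 with hp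
  set σv : Fin 2 → Matrix (Fin (2 ^ n)) (Fin (2 ^ n)) ℂ := ![ρ, σ1] with hσv
  have hreal_smul : ∀ (r : ℝ) (X : Matrix (Fin (2 ^ n)) (Fin (2 ^ n)) ℂ),
      r • X = ((r : ℝ) : ℂ) • X := by
    intro r X
    rw [← algebraMap_smul ℂ r X]
    norm_num
  have hsum : ∑ i, p i • σv i = ((2 : ℂ))⁻¹ • ρ + ((2 : ℂ))⁻¹ • σ1 := by
    rw [Fin.sum_univ_two, hσv]
    simp only [Matrix.cons_val_zero, Matrix.cons_val_one, Matrix.head_cons, hp]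
    rw [hreal_smul (1/2) ρ, hreal_smul (1/2) σ1]
    norm_num
  -- unit vectors for the sup
  haveI hne : Nonempty {v : Fin (2 ^ n) → ℂ // ∑ i, ‖v i‖ ^ 2 = 1} := by
    set i0 : Fin (2 ^ n) := ⟨0, by positivity⟩
    refine ⟨⟨Pi.single i0 1, ?_⟩⟩
    have key : ∀ x : Fin (2 ^ n), ‖(Pi.single i0 1 : Fin (2 ^ n) → ℂ) x‖ ^ 2
        = if x = i0 then (1:ℝ) else 0 := fun x => by
      rw [Pi.single_apply]; split_ifs <;> simp
    rw [Finset.sum_congr rfl fun x _ => key x,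
      Finset.sum_ite_eq' Finset.univ i0 (fun _ => (1:ℝ))]
    simp
  have hE1 : E 1 = 1 := by
    have h1 : (1 : Matrix (Fin (2 ^ n)) (Fin (2 ^ n)) ℂ)
        = ((2 ^ n : ℕ) : ℂ) • (((2 ^ n : ℕ) : ℂ)⁻¹ • 1) := by
      rw [smul_smul, mul_inv_cancel₀ hdc, one_smul]
    rw [h1, _root_.map_smul, hId, smul_smul, mul_inv_cancel₀ hdc, one_smul]
  have hat : (2:ℝ) ^ (-t) = a / 2 := by
    rw [ha, show -(t-1) = -t + 1 by ring, Real.rpow_add two_pos, Real.rpow_one]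
    ring
  have hmaxb : maxEig (∑ i, p i • σv i) ≤ (2 : ℝ) ^ (-t) := by
    rw [hsum, hat]
    apply ciSup_le
    rintro ⟨v, hv⟩
    have hq0 : 0 ≤ (star v ⬝ᵥ ρ.mulVec v) := hρ.1.dotProduct_mulVec_nonneg v
    set q : ℝ := (star v ⬝ᵥ ρ.mulVec v).re with hqdef
    have hqa : q ≤ a := le_trans (quad_le_maxEig ρ hv) hmaxa
    have hexp : star v ⬝ᵥ (((2:ℂ))⁻¹ • ρ + ((2:ℂ))⁻¹ • σ1).mulVec v
        = ((q/2 + (a - q)/(2*s) : ℝ) : ℂ) := by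
      rw [quad_add, quad_smul, quad_smul, hσ1, quad_smul, hMm, quad_sub,
        quad_smul_one, star_dot_self, hv]
      rw [show (star v ⬝ᵥ ρ.mulVec v) = ((q:ℝ):ℂ) from eq_re_of_nonneg hq0]
      have hsC : ((s:ℝ):ℂ) ≠ 0 := by exact_mod_cast hsne
      push_cast
      field_simp
    rw [hexp, Complex.ofReal_re]
    rw [div_add_div _ _ (by norm_num : (2:ℝ) ≠ 0) (by positivity),
      div_le_div_iff₀ (by positivity) (by norm_num : (0:ℝ) < 2)]
    nlinarith [hqa, hs3]
  -- spectral analysis of D0 = Eρ - I/d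
  set D0 : Matrix (Fin (2 ^ n)) (Fin (2 ^ n)) ℂ
      := E ρ - ((2 ^ n : ℕ) : ℂ)⁻¹ • 1 with hD0def
  have hEρpsd : (E ρ).PosSemidef := hPos ρ hρ.1
  have hD0 : D0.IsHermitian := by
    apply Matrix.IsHermitian.sub hEρpsd.1
    rw [Matrix.IsHermitian, Matrix.conjTranspose_smul, Matrix.conjTranspose_one]
    congr 1
    rw [Complex.star_def, map_inv₀, Complex.conj_natCast]
  set e : Fin (2 ^ n) → ℝ := hD0.eigenvalues with he
  set χR : Fin (2 ^ n) → ℝ := fun i => if 0 ≤ e i then 1 else 0 with hχR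
  set P : Matrix (Fin (2 ^ n)) (Fin (2 ^ n)) ℂ
      := cfm hD0 (fun i => ((χR i : ℝ) : ℂ)) with hP
  have hPpsd : P.PosSemidef :=
    cfm_posSemidef hD0 (fun i => by rw [hχR]; dsimp only; split_ifs <;> norm_num)
  have h1P : (1 : Matrix (Fin (2 ^ n)) (Fin (2 ^ n)) ℂ) - P
      = cfm hD0 (fun i => ((1 - χR i : ℝ) : ℂ)) := by
    rw [← cfm_one hD0, hP, cfm_sub]
    refine congrArg (cfm hD0) (funext fun i => ?_)
    rw [Pi.sub_apply, Pi.one_apply]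
    push_cast
    ring
  have h1Ppsd : ((1 : Matrix (Fin (2 ^ n)) (Fin (2 ^ n)) ℂ) - P).PosSemidef := by
    rw [h1P]
    exact cfm_posSemidef hD0 (fun i => by rw [hχR]; dsimp only; split_ifs <;> norm_num)
  have hspec : D0 = cfm hD0 (fun i => ((e i : ℝ) : ℂ)) := cfm_spectral hD0
  have hD0tr : D0.trace = 0 := by
    rw [hD0def, Matrix.trace_sub, hTP, hρ.2, Matrix.trace_smul, Matrix.trace_one,
      hcard, smul_eq_mul, inv_mul_cancel₀ hdc, sub_self]
  have hesum : ∑ i, e i = 0 := by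
    have h1 : D0.trace = ((∑ i, e i : ℝ) : ℂ) := by
      rw [congrArg Matrix.trace hspec, cfm_trace]
      push_cast
      rfl
    rw [hD0tr] at h1
    exact_mod_cast h1.symm
  -- the trace distance as a sum of |eigenvalues|
  set S : Matrix (Fin (2 ^ n)) (Fin (2 ^ n)) ℂ
      := cfm hD0 (fun i => ((|e i| : ℝ) : ℂ)) with hS
  have hSpsd : S.PosSemidef := cfm_posSemidef hD0 fun i => abs_nonneg _
  have hSsq : S ^ 2 = D0ᴴ * D0 := by
    have hDD : D0ᴴ * D0 = cfm hD0 (fun i => ((e i : ℝ) : ℂ))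
        * cfm hD0 (fun i => ((e i : ℝ) : ℂ)) := by
      rw [hD0.eq]
      exact congrArg₂ HMul.hMul hspec hspec
    rw [sq, hS, cfm_mul, hDD, cfm_mul]
    refine congrArg (cfm hD0) (funext fun i => ?_)
    simp only [Pi.mul_apply]
    exact_mod_cast congrArg Complex.ofReal (abs_mul_abs_self (e i))
  have hTD : traceDist (E ρ) (((2 ^ n : ℕ) : ℂ)⁻¹ • 1) = (1/2) * ∑ i, |e i| := by
    have h2 : ((Matrix.posSemidef_conjTranspose_mul_self D0).1.eigenvectorUnitary.1 *
        diagonal (((↑) : ℝ → ℂ) ∘ Real.sqrt ∘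
          (Matrix.posSemidef_conjTranspose_mul_self D0).1.eigenvalues) *
        (star (Matrix.posSemidef_conjTranspose_mul_self D0).1.eigenvectorUnitary :
          Matrix (Fin (2 ^ n)) (Fin (2 ^ n)) ℂ)) = S := by
      have e1 := Matrix.IsHermitian.cfc_eq (Matrix.posSemidef_conjTranspose_mul_self D0).1
        Real.sqrt
      rw [Matrix.IsHermitian.cfc, Unitary.conjStarAlgAut_apply] at e1
      refine Eq.trans e1.symm ?_
      rw [hD0.eq, ← sq, ← cfc_comp_pow Real.sqrt 2 D0 (ha := hD0.isSelfAdjoint)]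
      trans cfc (fun x : ℝ => |x|) D0
      · exact cfc_congr (fun x _ => Real.sqrt_sq_eq_abs x)
      rw [Matrix.IsHermitian.cfc_eq hD0, Matrix.IsHermitian.cfc, Unitary.conjStarAlgAut_apply, hS]
      rfl
    unfold traceDist
    refine Eq.trans (congrArg (fun X => (1/2 : ℝ) * (Matrix.trace X).re) h2) ?_
    show (1/2 : ℝ) * (S.trace).re = _
    rw [hS, cfm_trace]
    rw [show (∑ i, ((|e i| : ℝ) : ℂ)) = ((∑ i, |e i| : ℝ) : ℂ) by push_cast; rfl,
      Complex.ofReal_re]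
  -- half-sum identity
  have hhalf : (∑ i, if 0 ≤ e i then e i else 0) = (1/2) * ∑ i, |e i| := by
    have hpt : ∀ i : Fin (2 ^ n), (if 0 ≤ e i then e i else 0) = (|e i| + e i)/2 := by
      intro i
      rcases le_or_gt 0 (e i) with h | h
      · rw [if_pos h, abs_of_nonneg h]; ring
      · rw [if_neg (not_le.mpr h), abs_of_neg h]; ring
    rw [Finset.sum_congr rfl fun i _ => hpt i, ← Finset.sum_div,
      Finset.sum_add_distrib, hesum]
    ring
  -- the POVM
  set Av : Fin 2 → Matrix (Fin (2 ^ n)) (Fin (2 ^ n)) ℂ := ![P, 1 - P] with hAv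
  set f : Fin 2 → Fin 2 := ![0, 1] with hf
  have hApsd : ∀ z, (Av z).PosSemidef := by
    intro z
    fin_cases z
    · simpa [hAv] using hPpsd
    · simpa [hAv] using h1Ppsd
  have hAsum : ∑ z, Av z = 1 := by
    rw [Fin.sum_univ_two, hAv]
    simp
  have hpnn : ∀ i : Fin 2, 0 ≤ p i := fun i => by rw [hp]; norm_num
  have hpsum : ∑ i, p i = 1 := by rw [Fin.sum_univ_two, hp]; norm_num
  have hden : ∀ i, IsDensity (σv i) := by
    intro i
    fin_cases i
    · simpa [hσv] using hρ
    · simpa [hσv] using hσ1den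
  have habs := hsec 2 p σv hpnn hpsum hden hmaxb 2 Av hApsd hAsum f
  -- compute the two guessing probabilities
  set ρb := ∑ i, p i • σv i with hρbdef
  set α : ℝ := ((P * E ρ).trace).re with hα
  set w : ℝ := (P.trace).re with hw
  have hEρtr : (E ρ).trace = 1 := by rw [hTP, hρ.2]
  have hEσ1tr : (E σ1).trace = 1 := by rw [hTP, hσ1tr]
  have hsub_mul : ∀ Z : Matrix (Fin (2 ^ n)) (Fin (2 ^ n)) ℂ,
      (1 - P) * Z = Z - P * Z := by
    intro Z
    rw [Matrix.sub_mul, Matrix.one_mul]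
  have hEσ1 : E σ1 = ((s : ℝ) : ℂ)⁻¹ • ((a : ℂ) • 1 - E ρ) := by
    rw [hσ1, _root_.map_smul, hMm, map_sub, _root_.map_smul, hE1]
  have hβ : ((P * E σ1).trace).re = s⁻¹ * (a * w - α) := by
    rw [hEσ1, Matrix.mul_smul, Matrix.trace_smul, Matrix.mul_sub, Matrix.mul_smul,
      Matrix.mul_one, Matrix.trace_sub, Matrix.trace_smul, smul_eq_mul, smul_eq_mul,
      show ((s : ℝ) : ℂ)⁻¹ = (((s⁻¹ : ℝ)) : ℂ) by push_cast; ring,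
      Complex.re_ofReal_mul]
    congr 1
    rw [Complex.sub_re, Complex.re_ofReal_mul, hα, hw]
  have hT : α - dR⁻¹ * w = ∑ i, if 0 ≤ e i then e i else 0 := by
    have h2 : P * D0 = cfm hD0 ((fun i => ((χR i : ℝ) : ℂ)) * (fun i => ((e i : ℝ) : ℂ))) := by
      rw [← cfm_mul, ← hP]
      exact congrArg (fun X => P * X) hspec
    have h1 : (P * D0).trace = ((∑ i, if 0 ≤ e i then e i else 0 : ℝ) : ℂ) := by
      rw [h2, cfm_trace, Complex.ofReal_sum]
      refine Finset.sum_congr rfl fun i _ => ?_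
      rw [Pi.mul_apply, hχR]
      dsimp only
      split_ifs <;> push_cast <;> ring
    have h3 : (P * D0).trace = (P * E ρ).trace - ((2 ^ n : ℕ) : ℂ)⁻¹ * P.trace := by
      rw [hD0def, Matrix.mul_sub, Matrix.mul_smul, Matrix.mul_one, Matrix.trace_sub,
        Matrix.trace_smul, smul_eq_mul]
    have h4 := h1.symm.trans h3
    have h5 := congrArg Complex.re h4
    rw [Complex.ofReal_re, Complex.sub_re,
      show ((2 ^ n : ℕ) : ℂ)⁻¹ = (((dR⁻¹ : ℝ)) : ℂ) by rw [hdR]; push_cast; ring,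
      Complex.re_ofReal_mul] at h5
    rw [hα, hw]
    exact h5.symm
  have hT0 : 0 ≤ α - dR⁻¹ * w := by
    rw [hT, hhalf]
    positivity
  have hX : guessProb p Av f (fun i => E (σv i))
      = 1/2 * α + 1/2 * (1 - ((P * E σ1).trace).re) := by
    unfold guessProb
    rw [Fin.sum_univ_two]
    simp only [hAv, hf, hσv, Matrix.cons_val_zero, Matrix.cons_val_one,
      Matrix.head_cons, hp]
    rw [hsub_mul, Matrix.trace_sub, hEσ1tr, Complex.sub_re, Complex.one_re, hα]
  have hEρb : E ρb = (2 : ℂ)⁻¹ • E ρ + (2 : ℂ)⁻¹ • E σ1 := by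
    rw [hsum, map_add, _root_.map_smul, _root_.map_smul]
  have hρbtr : (E ρb).trace = 1 := by
    rw [hEρb, Matrix.trace_add, Matrix.trace_smul, Matrix.trace_smul, hEρtr, hEσ1tr]
    norm_num
  have hY : guessProb p Av f (fun _ => E ρb) = 1/2 := by
    unfold guessProb
    rw [Fin.sum_univ_two]
    simp only [hAv, hf, Matrix.cons_val_zero, Matrix.cons_val_one,
      Matrix.head_cons, hp]
    rw [hsub_mul, Matrix.trace_sub, hρbtr, Complex.sub_re, Complex.one_re]
    ring
  rw [hX, hY, hβ] at habs
  have hs1 : s + 1 = a * dR := by rw [hs]; ring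
  have hdRne : dR ≠ 0 := ne_of_gt hdRpos
  have hXY : 1/2 * α + 1/2 * (1 - s⁻¹ * (a * w - α)) - 1/2
      = (a * dR) * (α - dR⁻¹ * w) / (2 * s) := by
    rw [hs]
    have h2 : a * dR - 1 ≠ 0 := by rw [← hs]; exact hsne
    field_simp
    ring
  rw [hXY] at habs
  have hnum : 0 ≤ (a * dR) * (α - dR⁻¹ * w) / (2 * s) := by
    apply div_nonneg _ (by positivity)
    exact mul_nonneg (by positivity) hT0
  rw [abs_of_nonneg hnum] at habs
  have hKT : (a * dR) * (α - dR⁻¹ * w) < ε * (2 * s) :=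
    (div_lt_iff₀ (by positivity)).mp habs
  have hε : 0 < ε := by
    nlinarith [hKT, hspos, mul_nonneg (mul_nonneg hapos.le hdRpos.le) hT0]
  rw [hTD, ← hhalf, ← hT]
  nlinarith [hKT, had, hT0, hε, hs]
end
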